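/- Let d ≥ 1, N_s ≥ 1, 1 ≤ k ≤ N_s, let P ⊆ ℝ^d, let α : Fin N_s → ℝ^d, fix j ∈ Fin N_s, and let G ∈ ℝ satisfy ⟪α_i, u⟫ − ⟪α_j, u⟫ ≤ G for all u ∈ P and all i. Then the following are equivalent: (i) there exist u ∈ P and z : Fin N_s → {0,1} such that ⟪α_j, u⟫ ≥ ⟪α_i, u⟫ − G(1 − z_i) for every i ≠ j and Σ_{i ≠ j} z_i ≥ N_s − k; (ii) there exists u ∈ P such that ⟪α_j, u⟫ is among the k largest values of the tuple (⟪α_1, u⟫, …, ⟪α_{N_s}, u⟫), i.e., ⟪α_j, u⟫ ≥ the k-th largest of these values. -/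

import Mathlib

open Finset

/-- The values of `L : Fin N → ℝ` rearranged in nonincreasing order. -/
noncomputable def sortedDesc {N : ℕ} (L : Fin N → ℝ) : Fin N → ℝ :=
  fun j => L (Tuple.sort L j.rev)

/-- The `k`-th largest value (with `k` 1-indexed) of `L : Fin N → ℝ`. -/
noncomputable def kthLargest {N : ℕ} (L : Fin N → ℝ) (k : ℕ) (h : k - 1 < N) : ℝ :=
  sortedDesc L ⟨k - 1, h⟩

/-- The sum of the `k` largest values of `L : Fin N → ℝ`. -/
noncomputable def sumKLargest {N : ℕ} (L : Fin N → ℝ) (k : ℕ) : ℝ :=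
  ∑ j ∈ Finset.univ.filter (fun j : Fin N => (j : ℕ) < k), sortedDesc L j

/-!
Fix a feasible `u` and write `L i = ⟪α i, u⟫`. The value `L j` is at least the `k`-th largest
value iff fewer than `k` entries strictly exceed it, i.e. iff at least `Ns - k` indices `i ≠ j`
satisfy `L i ≤ L j`. A binary `z` satisfying the big-M constraints can only switch on such
indices, and conversely the indicator of `L i ≤ L j` satisfies them because `G` bounds
`L i - L j` on `P`.
-/

section SortedDesc

variable {N : ℕ} (L : Fin N → ℝ)

lemma antitone_sortedDesc : Antitone (sortedDesc L) :=
  fun _ _ hab => Tuple.monotone_sort L (Fin.rev_le_rev.mpr hab)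

lemma card_lt_sortedDesc (c : ℝ) : #{p | c < sortedDesc L p} = #{i | c < L i} :=
  card_equiv (Fin.revPerm.trans (Tuple.sort L)) fun _ => by
    simp only [mem_filter, mem_univ, true_and]
    rfl

-- Since `sortedDesc L` is antitone, the positions holding values above `c` form an initial segment.
lemma sortedDesc_le_iff (c : ℝ) (m : Fin N) :
    sortedDesc L m ≤ c ↔ #{i | c < L i} ≤ m := by
  rw [← card_lt_sortedDesc]
  constructor
  · intro hm
    have hsub : ({p | c < sortedDesc L p} : Finset (Fin N)) ⊆ Iio m := by
      intro p hp
      simp only [mem_filter, mem_univ, true_and] at hp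
      by_contra! hmp
      exact (antitone_sortedDesc L (not_lt.mp (mt mem_Iio.mpr hmp))).not_gt (hm.trans_lt hp)
    simpa using card_le_card hsub
  · intro hcard
    by_contra! hm
    have hsub : Iic m ⊆ ({p | c < sortedDesc L p} : Finset (Fin N)) := by
      intro p hp
      simpa using hm.trans_le (antitone_sortedDesc L (mem_Iic.mp hp))
    have := card_le_card hsub
    rw [Fin.card_Iic] at this
    omega

lemma kthLargest_le_iff (c : ℝ) (k : ℕ) (h : k - 1 < N) :
    kthLargest L k h ≤ c ↔ #{i | c < L i} ≤ k - 1 :=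
  sortedDesc_le_iff L c ⟨k - 1, h⟩

end SortedDesc

section BigM

variable {ι : Type*} [Fintype ι] [DecidableEq ι] (L : ι → ℝ) (j : ι)

lemma card_erase_le_add_card_lt :
    #{i ∈ univ.erase j | L i ≤ L j} + #{i | L j < L i} = Fintype.card ι - 1 := by
  have hlt : ({i ∈ univ.erase j | ¬L i ≤ L j} : Finset ι) =
      ({i | L j < L i} : Finset ι) := by
    ext i
    simp only [mem_filter, mem_erase, mem_univ, and_true, true_and, not_le]
    exact ⟨And.right, fun h => ⟨fun hij => (hij ▸ h).false, h⟩⟩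
  rw [← hlt, card_filter_add_card_filter_not, card_erase_of_mem (mem_univ j), card_univ]

lemma card_sub_le_card_le_iff {k : ℕ} (hk : 1 ≤ k) :
    (Fintype.card ι : ℝ) - k ≤ #{i ∈ univ.erase j | L i ≤ L j} ↔
      #{i | L j < L i} ≤ k - 1 := by
  have hcard := card_erase_le_add_card_lt L j
  rw [sub_le_iff_le_add]
  norm_cast
  omega

lemma sum_le_card_of_bigM {G : ℝ} {z : ι → ℝ} (hz : ∀ i, z i = 0 ∨ z i = 1)
    (hcon : ∀ i, i ≠ j → L j ≥ L i - G * (1 - z i)) :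
    ∑ i ∈ univ.erase j, z i ≤ #{i ∈ univ.erase j | L i ≤ L j} := by
  rw [card_filter, Nat.cast_sum]
  refine sum_le_sum fun i hi => ?_
  rcases hz i with h | h
  · rw [h]
    split_ifs <;> norm_num
  · have hle : L i ≤ L j := by simpa [h] using hcon i (ne_of_mem_erase hi)
    simp [h, hle]

lemma exists_bigM_of_le_card {G : ℝ} (hG : ∀ i, L i - L j ≤ G) {r : ℝ}
    (hr : r ≤ #{i ∈ univ.erase j | L i ≤ L j}) :
    ∃ z : ι → ℝ, (∀ i, z i = 0 ∨ z i = 1) ∧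
      (∀ i, i ≠ j → L j ≥ L i - G * (1 - z i)) ∧ r ≤ ∑ i ∈ univ.erase j, z i := by
  refine ⟨fun i => if L i ≤ L j then 1 else 0, fun i => ?_, fun i _ => ?_, ?_⟩
  · by_cases h : L i ≤ L j <;> simp [h]
  · by_cases h : L i ≤ L j
    · simp [h]
    · simp only [h, if_false, sub_zero, mul_one]
      linarith [hG i]
  · simpa [sum_boole] using hr

end BigM

/-- correctness of the big-M MIP (18): suppose `G` bounds
`⟪α i, u⟫ - ⟪α j, u⟫` over all `u ∈ P` and all `i`. Then the MIP constraints are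
feasible for index `j` iff there exists `u ∈ P` such that `⟪α j, u⟫` is among the `k`
largest values of `(⟪α 1, u⟫, …, ⟪α Ns, u⟫)`. -/
theorem bigM_MIP_feasible_iff_support (d Ns k : ℕ)
    (hk1 : 1 ≤ k) (hkNs : k ≤ Ns)
    (P : Set (EuclideanSpace ℝ (Fin d))) (α : Fin Ns → EuclideanSpace ℝ (Fin d))
    (j : Fin Ns) (G : ℝ)
    (hG : ∀ u ∈ P, ∀ i : Fin Ns, (inner ℝ (α i) u : ℝ) - (inner ℝ (α j) u : ℝ) ≤ G) :
    ((∃ u ∈ P, ∃ z : Fin Ns → ℝ, (∀ i, z i = 0 ∨ z i = 1) ∧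
        (∀ i, i ≠ j → (inner ℝ (α j) u : ℝ) ≥ (inner ℝ (α i) u : ℝ) - G * (1 - z i)) ∧
        ((Ns : ℝ) - k ≤ ∑ i ∈ Finset.univ.erase j, z i)) ↔
      (∃ u ∈ P,
        (inner ℝ (α j) u : ℝ) ≥
          kthLargest (fun i : Fin Ns => (inner ℝ (α i) u : ℝ)) k (by omega))) := by
  constructor
  · rintro ⟨u, hu, z, hz, hcon, hsum⟩
    have hcount := (card_sub_le_card_le_iff (fun i => inner ℝ (α i) u) j hk1).mp
    refine ⟨u, hu, (kthLargest_le_iff _ _ k _).mpr (hcount ?_)⟩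
    simpa using hsum.trans (sum_le_card_of_bigM _ j hz hcon)
  · rintro ⟨u, hu, hkth⟩
    refine ⟨u, hu, exists_bigM_of_le_card _ j (hG u hu) ?_⟩
    simpa using (card_sub_le_card_le_iff _ j hk1).mpr ((kthLargest_le_iff _ _ k _).mp hkth)
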